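/- Two relational COUNT-queries are equivalent if and only if they are isomorphic. -/

import Mathlib

namespace CQ

/-! ### Variables, terms, comparisons, atoms, bodies, databases -/

abbrev Var := ℕ

inductive Term where
  | var : Var → Term
  | const : ℚ → Term
deriving DecidableEq

def Term.eval (γ : Var → ℚ) : Term → ℚ
  | .var v => γ v
  | .const c => c

def Term.vars : Term → Finset Var
  | .var v => {v}
  | .const _ => ∅

def Term.subst (θ : Var → Term) : Term → Term
  | .var v => θ v
  | .const c => .const c

def Term.rename (f : Var → Var) : Term → Term
  | .var v => .var (f v)
  | .const c => .const c

def termListVars (l : List Term) : Finset Var := l.foldr (fun t s => t.vars ∪ s) ∅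

inductive CompOp where
  | lt | le | eq | ne
deriving DecidableEq

structure Comp where
  lhs : Term
  op : CompOp
  rhs : Term
deriving DecidableEq

def Comp.holds (γ : Var → ℚ) (c : Comp) : Prop :=
  match c.op with
  | .lt => c.lhs.eval γ < c.rhs.eval γ
  | .le => c.lhs.eval γ ≤ c.rhs.eval γ
  | .eq => c.lhs.eval γ = c.rhs.eval γ
  | .ne => c.lhs.eval γ ≠ c.rhs.eval γ

def Comp.vars (c : Comp) : Finset Var := c.lhs.vars ∪ c.rhs.vars

def Comp.subst (θ : Var → Term) (c : Comp) : Comp := ⟨c.lhs.subst θ, c.op, c.rhs.subst θ⟩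

/-- `γ` satisfies all comparisons in `C`. -/
def holdsAll (γ : Var → ℚ) (C : Finset Comp) : Prop := ∀ c ∈ C, c.holds γ

/-- the set of comparisons `C` entails the set of comparisons `C'`. -/
def entails (C C' : Finset Comp) : Prop := ∀ γ : Var → ℚ, holdsAll γ C → holdsAll γ C'

def compsVars (C : Finset Comp) : Finset Var := C.sup Comp.vars

def Term.consts : Term → Finset ℚ
  | .var _ => ∅
  | .const c => {c}

def compsConsts (C : Finset Comp) : Finset ℚ := C.sup (fun c => c.lhs.consts ∪ c.rhs.consts)

/-- A term over the variable set `S` and constant set `K`. -/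
def TermOver (S : Finset Var) (K : Finset ℚ) : Term → Prop
  | .var v => v ∈ S
  | .const c => c ∈ K

/-- A set of comparisons is deductively closed if it contains every comparison over
its variables and constants that it entails. -/
def DeductivelyClosed (C : Finset Comp) : Prop :=
  ∀ c : Comp, TermOver (compsVars C) (compsConsts C) c.lhs →
    TermOver (compsVars C) (compsConsts C) c.rhs → entails C {c} → c ∈ C

def SatisfiableComps (C : Finset Comp) : Prop := ∃ γ : Var → ℚ, holdsAll γ C

structure Atom (Rel : Type) where
  rel : Rel
  args : List Term
deriving DecidableEq

variable {Rel : Type} [DecidableEq Rel] {ι : Type} [DecidableEq ι]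

def Atom.vars (a : Atom Rel) : Finset Var := termListVars a.args
def Atom.subst (θ : Var → Term) (a : Atom Rel) : Atom Rel := ⟨a.rel, a.args.map (Term.subst θ)⟩
def Atom.rename (f : Var → Var) (a : Atom Rel) : Atom Rel := ⟨a.rel, a.args.map (Term.rename f)⟩

def atomsVars (R : Finset (Atom Rel)) : Finset Var := R.sup Atom.vars

structure Body (Rel : Type) where
  atoms : Finset (Atom Rel)
  comps : Finset Comp

def Body.vars (B : Body Rel) : Finset Var := atomsVars B.atoms ∪ compsVars B.comps

/-- A database assigns to every relation symbol a set of tuples over `ℚ`. -/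
abbrev Database (Rel : Type) := Rel → Set (List ℚ)

def FiniteDB (D : Database Rel) : Prop := ∀ p, (D p).Finite

def Atom.satisfied (D : Database Rel) (γ : Var → ℚ) (a : Atom Rel) : Prop :=
  a.args.map (Term.eval γ) ∈ D a.rel

def Body.satisfied (D : Database Rel) (γ : Var → ℚ) (B : Body Rel) : Prop :=
  (∀ a ∈ B.atoms, a.satisfied D γ) ∧ holdsAll γ B.comps

def Body.subst (θ : Var → Term) (B : Body Rel) : Body Rel :=
  ⟨B.atoms.image (Atom.subst θ), B.comps.image (Comp.subst θ)⟩

/-! ### Aggregate queries (COUNT is the special case of an empty aggregation list;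
a SUM-query `q(x̄; SUM(y))` has aggregation list `[y]`; in general the query sums,
for each group, the product of the values of the variables in `aggVars`). -/

structure AggQuery (Rel : Type) where
  head : List Var
  aggVars : List Var
  body : Body Rel

/-- Safety: the head variables and aggregation variables occur in relational atoms. -/
def AggQuery.Safe (q : AggQuery Rel) : Prop :=
  ∀ v ∈ q.head ++ q.aggVars, v ∈ atomsVars q.body.atoms

/-- The group of the tuple `t`: all satisfying assignments with head value `t`,
normalized to be `0` outside the variables of the body. -/
def group (q : AggQuery Rel) (D : Database Rel) (t : List ℚ) : Set (Var → ℚ) :=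
  {γ | q.body.satisfied D γ ∧ (∀ v, v ∉ q.body.vars → γ v = 0) ∧ q.head.map γ = t}

noncomputable def AggQuery.result (q : AggQuery Rel) (D : Database Rel) : Set (List ℚ × ℚ) :=
  {r | ∃ γ, q.body.satisfied D γ ∧ r.1 = q.head.map γ ∧
       r.2 = ∑ᶠ γ' ∈ group q D r.1, (q.aggVars.map γ').prod}

def AggQuery.equiv (q q' : AggQuery Rel) : Prop :=
  ∀ D : Database Rel, FiniteDB D → q.result D = q'.result D

def IsCountQuery (q : AggQuery Rel) : Prop := q.aggVars = [] ∧ q.Safe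
def IsRelational (q : AggQuery Rel) : Prop := q.body.comps = ∅
def IsLinear (q : AggQuery Rel) : Prop :=
  ∀ a ∈ q.body.atoms, ∀ b ∈ q.body.atoms, a.rel = b.rel → a = b

def BodySatisfiable (B : Body Rel) : Prop :=
  ∃ (D : Database Rel) (γ : Var → ℚ), FiniteDB D ∧ B.satisfied D γ

/-- The nondistinguished variables of a view. -/
def ndv (v : AggQuery Rel) : Finset Var := v.body.vars \ v.head.toFinset

def IsCountView (v : AggQuery Rel) : Prop := v.aggVars = [] ∧ v.Safe
def IsSumView (v : AggQuery Rel) : Prop := ∃ y, v.aggVars = [y] ∧ y ∉ v.head ∧ v.Safe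

/-- The extension of the views over `D`, seen as a database over the view names:
the extension of view `i` consists of the tuples of `(V i).result D`, with
the aggregate value appended to the grouping tuple. -/
noncomputable def viewDB (V : ι → AggQuery Rel) (D : Database Rel) : Database ι :=
  fun i => (fun p : List ℚ × ℚ => p.1 ++ [p.2]) '' (V i).result D

/-- A head instantiation `θ`, extended as the identity outside the head of `v`. -/
def headInst (v : AggQuery Rel) (θ : Var → Term) : Var → Term :=
  fun x => if x ∈ v.head then θ x else Term.var x

/-! ### Rewriting candidates -/

/-- The data of a rewriting candidate: `n` view atoms, the `i`-th using view
`views i`, head instantiation `θ i` and fresh output variable `z i`, together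
with additional comparisons `C'`. -/
structure PreCand (ι : Type) where
  n : ℕ
  views : Fin n → ι
  θ : Fin n → Var → Term
  z : Fin n → Var
  C' : Finset Comp

def PreCand.atom (pc : PreCand ι) (V : ι → AggQuery Rel) (i : Fin pc.n) : Atom ι :=
  ⟨pc.views i, ((V (pc.views i)).head.map (pc.θ i)) ++ [Term.var (pc.z i)]⟩

/-- The candidate as a query over the view names; it groups by `head` and sums
the products of the variables `aggExtra ++ z₁ ⋯ zₙ`. -/
def PreCand.query (pc : PreCand ι) (V : ι → AggQuery Rel) (head aggExtra : List Var) :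
    AggQuery ι :=
  { head := head
    aggVars := aggExtra ++ List.ofFn pc.z
    body := ⟨Finset.univ.image (pc.atom V), pc.C'⟩ }

/-- The variables `z i` are fresh: pairwise distinct and not appearing elsewhere. -/
def PreCand.Fresh (pc : PreCand ι) (V : ι → AggQuery Rel) (head : List Var) : Prop :=
  Function.Injective pc.z ∧
  ∀ i : Fin pc.n, pc.z i ∉ head ∧ pc.z i ∉ compsVars pc.C' ∧
    ∀ j : Fin pc.n, pc.z i ∉ termListVars ((V (pc.views j)).head.map (pc.θ j))

/-- The substitution unfolding a view atom: head variables are instantiated by `θ`,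
nondistinguished variables are renamed by `ρ`. -/
def unfoldSubst (v : AggQuery Rel) (θ : Var → Term) (ρ : Var → Var) : Var → Term :=
  fun x => if x ∈ v.head then θ x else Term.var (ρ x)

def PreCand.forbidden (pc : PreCand ι) (V : ι → AggQuery Rel) (head : List Var) : Finset Var :=
  head.toFinset ∪ compsVars pc.C' ∪
    Finset.univ.sup (fun j : Fin pc.n => termListVars ((V (pc.views j)).head.map (pc.θ j)))

/-- `ρ` renames the nondistinguished variables of the view occurrences apart:
injectively, and avoiding all variables appearing elsewhere. -/
def PreCand.RenApart (pc : PreCand ι) (V : ι → AggQuery Rel) (head : List Var)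
    (ρ : Fin pc.n → Var → Var) : Prop :=
  (∀ (i j : Fin pc.n) (x y : Var), x ∈ ndv (V (pc.views i)) → y ∈ ndv (V (pc.views j)) →
      ρ i x = ρ j y → i = j ∧ x = y) ∧
  (∀ (i : Fin pc.n) (x : Var), x ∈ ndv (V (pc.views i)) → ρ i x ∉ pc.forbidden V head)

/-- The unfolding of a candidate: replace every view atom by the correspondingly
instantiated view body, with nondistinguished variables renamed apart by `ρ`. -/
def PreCand.unfold (pc : PreCand ι) (V : ι → AggQuery Rel) (head uAgg : List Var)
    (ρ : Fin pc.n → Var → Var) : AggQuery Rel :=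
  { head := head
    aggVars := uAgg
    body :=
      ⟨Finset.univ.biUnion (fun i =>
          ((V (pc.views i)).body.subst (unfoldSubst (V (pc.views i)) (pc.θ i) (ρ i))).atoms),
       (Finset.univ.biUnion (fun i =>
          ((V (pc.views i)).body.subst (unfoldSubst (V (pc.views i)) (pc.θ i) (ρ i))).comps))
         ∪ pc.C'⟩ }

/-- `r ≡_V q` : over every (finite) database, `r` evaluated on the view extensions
equals `q` evaluated on the database. -/
def equivModViews (V : ι → AggQuery Rel) (r : AggQuery ι) (q : AggQuery Rel) : Prop :=
  ∀ D : Database Rel, FiniteDB D → r.result (viewDB V D) = q.result D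

/-- `r` is a COUNT-rewriting candidate for `q` over the views `V`. -/
def IsCountCandidate (V : ι → AggQuery Rel) (q : AggQuery Rel) (r : AggQuery ι) : Prop :=
  ∃ pc : PreCand ι, pc.Fresh V q.head ∧ (∀ i, IsCountView (V (pc.views i))) ∧
    r = pc.query V q.head []

/-- `r` is a SUM-rewriting candidate (of form `r₁` or `r₂`) for a SUM-query with
head `q.head` and summation variable `y`, over the views `V`. -/
def IsSumCandidate (V : ι → AggQuery Rel) (q : AggQuery Rel) (y : Var) (r : AggQuery ι) :
    Prop :=
  ∃ pc : PreCand ι, pc.Fresh V q.head ∧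
    (((∀ i, IsCountView (V (pc.views i))) ∧
        (∃ i, Term.var y ∈ (V (pc.views i)).head.map (pc.θ i)) ∧
        r = pc.query V q.head [y]) ∨
      (∃ i₀ : Fin pc.n, IsSumView (V (pc.views i₀)) ∧
        (∀ j, j ≠ i₀ → IsCountView (V (pc.views j))) ∧
        r = pc.query V q.head []))

/-! ### Usability -/

/-- `R-usable(v, θ, φ)` : `φ` is an injective variable renaming, the identity on the
variables of `θū`, mapping `θR_v` isomorphically onto a subset `R'` of `R` such that
every variable occurring both in `R'` and in `R ∖ R'` occurs in `θū`. -/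
def Rusable (v : AggQuery Rel) (θ : Var → Term) (φ : Var → Var) (R : Finset (Atom Rel)) :
    Prop :=
  Function.Injective φ ∧
  (∀ x ∈ termListVars (v.head.map θ), φ x = x) ∧
  (v.body.atoms.image (fun a => (a.subst (headInst v θ)).rename φ)) ⊆ R ∧
  (∀ x, x ∈ atomsVars (v.body.atoms.image (fun a => (a.subst (headInst v θ)).rename φ)) →
    x ∈ atomsVars (R \ (v.body.atoms.image (fun a => (a.subst (headInst v θ)).rename φ))) →
    x ∈ termListVars (v.head.map θ))

/-- `C-usable(v, θ, φ)` : `C ⊨ φ(θ C_v)` and `C_v ⊨ C^{φ(θ ndv(v))}`. -/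
def Cusable (v : AggQuery Rel) (θ : Var → Term) (φ : Var → Var) (C : Finset Comp) : Prop :=
  entails C (v.body.comps.image (fun c => (c.subst (headInst v θ)).subst (fun x => Term.var (φ x)))) ∧
  entails v.body.comps (C.filter (fun c => (c.vars ∩ (ndv v).image φ).Nonempty))

/-! ### The algorithm Count_Rewriting / Compute_Rewriting -/

/-- The inner for-loop of the algorithm, processing the atoms of the chosen view body
in some order: a nondistinguished atom `a` (one containing a nondistinguished variable)
causes `f a` to be removed from `R`, fails if `f a` is not in `Not_Covered`, and is
removed from `Not_Covered`; for every atom, `f a` is removed from `Not_Covered`. -/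
inductive Loop (nd : Atom Rel → Prop) (f : Atom Rel → Atom Rel) :
    List (Atom Rel) → Finset (Atom Rel) → Finset (Atom Rel) →
    Finset (Atom Rel) → Finset (Atom Rel) → Prop
  | nil (R NC : Finset (Atom Rel)) : Loop nd f [] R NC R NC
  | consND {a : Atom Rel} {l R NC R' NC'} (h : nd a) (hin : f a ∈ NC) :
      Loop nd f l (R.erase (f a)) (NC.erase (f a)) R' NC' →
      Loop nd f (a :: l) R NC R' NC'
  | consD {a : Atom Rel} {l R NC R' NC'} (h : ¬ nd a) :
      Loop nd f l R (NC.erase (f a)) R' NC' →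
      Loop nd f (a :: l) R NC R' NC'

/-- `Exec V R C NC acc Cf` : starting from the state with current body `R ∧ C` and
set `NC` of not yet covered atoms, some execution of the while-loop of the algorithm
succeeds, choosing the view/instantiation sequence `acc` and terminating with final
comparison set `Cf`. -/
inductive Exec (V : ι → AggQuery Rel) :
    Finset (Atom Rel) → Finset Comp → Finset (Atom Rel) →
    List (ι × (Var → Term)) → Finset Comp → Prop
  | done (R : Finset (Atom Rel)) (C : Finset Comp) : Exec V R C ∅ [] C
  | step {R C NC R' NC' acc Cf} (i : ι) (θ : Var → Term) (φ : Var → Var)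
      (l : List (Atom Rel))
      (hR : Rusable (V i) θ φ R) (hC : Cusable (V i) θ φ C)
      (hnd : l.Nodup) (hset : l.toFinset = (V i).body.atoms)
      (hloop : Loop (fun a => (a.vars ∩ ndv (V i)).Nonempty)
          (fun a => (a.subst (headInst (V i) θ)).rename φ) l R NC R' NC')
      (hrest : Exec V R'
          (C.filter (fun c => c.vars ∩
            (atomsVars ((V i).body.atoms.image (fun a => (a.subst (headInst (V i) θ)).rename φ))
              \ termListVars ((V i).head.map θ)) = ∅))
          NC' acc Cf) :
      Exec V R C NC ((i, θ) :: acc) Cf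

/-- The rewriting candidate assembled from the sequence of choices of a run of the
algorithm, fresh variables `z` and the final comparison set `Cf`. -/
def PreCand.ofList (acc : List (ι × (Var → Term))) (z : Fin acc.length → Var)
    (Cf : Finset Comp) : PreCand ι :=
  ⟨acc.length, fun k => (acc.get k).1, fun k => (acc.get k).2, z, Cf⟩

/-- `r` is a possible output of algorithm Count_Rewriting on input `(q, V)`. -/
def CountReturns (V : ι → AggQuery Rel) (q : AggQuery Rel) (r : AggQuery ι) : Prop :=
  ∃ (acc : List (ι × (Var → Term))) (Cf : Finset Comp) (z : Fin acc.length → Var),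
    Exec V q.body.atoms q.body.comps q.body.atoms acc Cf ∧
    (PreCand.ofList acc z Cf).Fresh V q.head ∧
    r = (PreCand.ofList acc z Cf).query V q.head []

/-- `r` is a possible output of algorithm Sum_Rewriting on input `(q, V)`, where `y`
is the summation variable of `q`: first Compute_Rewriting is run on the COUNT-version
of `q`; if exactly one chosen view is a SUM-view, the result is returned unchanged;
if all chosen views are COUNT-views and `y` occurs among the instantiated view heads,
`y` is multiplied into the aggregation term. -/
def SumReturns (V : ι → AggQuery Rel) (q : AggQuery Rel) (y : Var) (r : AggQuery ι) : Prop :=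
  ∃ (acc : List (ι × (Var → Term))) (Cf : Finset Comp) (z : Fin acc.length → Var),
    Exec V q.body.atoms q.body.comps q.body.atoms acc Cf ∧
    (PreCand.ofList acc z Cf).Fresh V q.head ∧
    ((∃ i₀, IsSumView (V ((PreCand.ofList acc z Cf).views i₀)) ∧
        (∀ j, j ≠ i₀ → IsCountView (V ((PreCand.ofList acc z Cf).views j))) ∧
        r = (PreCand.ofList acc z Cf).query V q.head []) ∨
      ((∀ i, IsCountView (V ((PreCand.ofList acc z Cf).views i))) ∧
        (∃ i, Term.var y ∈ (V ((PreCand.ofList acc z Cf).views i)).head.map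
          ((PreCand.ofList acc z Cf).θ i)) ∧
        r = (PreCand.ofList acc z Cf).query V q.head [y]))

end CQ

/-!
Renaming variables by a bijection transports satisfying assignments, so isomorphic queries are
equivalent. Conversely, let `q ≡ q'` and blow up the canonical database of `q'` by replacing each
variable `w` with `N w` fresh copies. The assignments of `q` with the frozen head of `q'` collapse
onto assignments `γ₀` into the canonical database, and exactly `∏ N (w v)` of them lie over `γ₀`,
the product running over the nondistinguished variables `v` of `q` that `γ₀` sends to a frozen
variable `w v`. So both counts are polynomials in the `N w`, and they coincide. The identity
assignment of `q'` contributes the monomial `∏ N w` over the nondistinguished variables of `q'`,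
hence some `γ₀` for `q` has the same multidegree, i.e. it is bijective from the nondistinguished
variables of `q` not sent to constants onto those of `q'`. Doing this in both directions, a size
comparison shows that no variable goes to a constant, so `γ₀` yields homomorphisms `q → q'` and
`q' → q` bijective on variables; counting atoms then shows that they are isomorphisms.
-/

lemma List.Forall₂.imp_of_mem {α β : Type*} {R S : α → β → Prop} {l₁ : List α} {l₂ : List β}
    (h : List.Forall₂ R l₁ l₂) (H : ∀ a ∈ l₁, ∀ b ∈ l₂, R a b → S a b) :
    List.Forall₂ S l₁ l₂ := by
  rw [List.forall₂_iff_zip] at h ⊢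
  exact ⟨h.1, fun hab => H _ (List.of_mem_zip hab).1 _ (List.of_mem_zip hab).2 (h.2 hab)⟩

lemma List.Forall₂.exists_mem_left {α β : Type*} {R : α → β → Prop} :
    ∀ {l₁ : List α} {l₂ : List β}, List.Forall₂ R l₁ l₂ → ∀ b ∈ l₂, ∃ a ∈ l₁, R a b
  | _, _, .nil, _, hb => absurd hb List.not_mem_nil
  | _, _, .cons h t, _, hb => by
    rcases List.mem_cons.1 hb with rfl | hb
    · exact ⟨_, List.mem_cons_self, h⟩
    · obtain ⟨a, ha, hab⟩ := t.exists_mem_left _ hb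
      exact ⟨a, List.mem_cons_of_mem _ ha, hab⟩

lemma List.finite_setOf_forall₂ {α β : Type*} {R : α → β → Prop} (h : ∀ a, {b | R a b}.Finite)
    (l : List α) : {l' | List.Forall₂ R l l'}.Finite := by
  induction l with
  | nil => exact (Set.finite_singleton []).subset fun l' hl' => List.forall₂_nil_left_iff.1 hl'
  | cons a l ih =>
    refine (((h a).prod ih).image fun p => p.1 :: p.2).subset ?_
    intro l' hl'
    cases hl' with
    | cons hb hl' => exact ⟨(_, _), ⟨hb, hl'⟩, rfl⟩

lemma ncard_setOf_mem_on_eq_off {α β : Type*} (T : Finset α) (γ₀ : α → β) (A : α → Set β) :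
    {γ : α → β | (∀ v ∈ T, γ v ∈ A v) ∧ ∀ v ∉ T, γ v = γ₀ v}.ncard = ∏ v ∈ T, (A v).ncard := by
  classical
  let e : {γ : α → β | (∀ v ∈ T, γ v ∈ A v) ∧ ∀ v ∉ T, γ v = γ₀ v} ≃ ∀ v : T, A v :=
    { toFun := fun γ v => ⟨γ.1 v, γ.2.1 v v.2⟩
      invFun := fun c => ⟨fun x => if hx : x ∈ T then c ⟨x, hx⟩ else γ₀ x,
        fun v hv => by simp [hv], fun v hv => by simp [hv]⟩
      left_inv := fun γ => by
        ext x
        by_cases hx : x ∈ T <;> simp [hx, γ.2.2 x]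
      right_inv := fun c => by
        ext v
        simp [v.2] }
  rw [← Nat.card_coe_set_eq, Nat.card_congr e, Nat.card_pi]
  simp_rw [Nat.card_coe_set_eq]
  exact Finset.prod_coe_sort T fun v => (A v).ncard

lemma List.bijOn_of_map_eq {α β : Type*} {f : α → β} {g : β → α} {l : List α} {l' : List β}
    (hf : l.map f = l') (hg : l'.map g = l) : Set.BijOn f {x | x ∈ l} {y | y ∈ l'} := by
  have hgf : ∀ x ∈ l, g (f x) = x := List.map_inj_left.1
    (by rw [← List.map_map, hf, hg, List.map_id] : l.map (g ∘ f) = l.map id)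
  refine ⟨fun x hx => hf ▸ List.mem_map_of_mem hx, fun x hx y hy hxy => ?_, fun y hy => ?_⟩
  · rw [← hgf x hx, ← hgf y hy, hxy]
  · obtain ⟨x, hx, rfl⟩ := List.mem_map.1 (hf ▸ hy : y ∈ l.map f)
    exact ⟨x, hx, rfl⟩

lemma Set.BijOn.exists_equiv_eqOn {α : Type*} {s t : Set α} {f : α → α} (hs : s.Finite)
    (h : Set.BijOn f s t) : ∃ e : α ≃ α, Set.EqOn e f s := by
  classical
  have : Finite {x | x ∈ s} := hs
  exact ⟨(h.equiv f).extendSubtype, fun x hx => by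
    rw [Equiv.extendSubtype_apply_of_mem _ _ hx]; rfl⟩

lemma Finset.bijOn_of_card_filter_eq {α β : Type*} [DecidableEq β] {s : Finset α}
    {t : Finset β} {f : α → β} (h : ∀ b, (s.filter (f · = b)).card = if b ∈ t then 1 else 0) :
    Set.BijOn f s t := by
  have hmem : ∀ a ∈ s, a ∈ s.filter (f · = f a) := fun a ha => Finset.mem_filter.2 ⟨ha, rfl⟩
  refine ⟨fun a ha => ?_, fun a ha a' ha' heq => ?_, fun b hb => ?_⟩
  · by_contra hfa
    have := h (f a)
    rw [if_neg (Finset.mem_coe.not.1 hfa), Finset.card_eq_zero] at this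
    exact Finset.notMem_empty a (this ▸ hmem a ha)
  · have hle : (s.filter (f · = f a)).card ≤ 1 := by
      rw [h]
      split_ifs <;> simp
    exact Finset.card_le_one.1 hle a (hmem a ha) a' (Finset.mem_filter.2 ⟨ha', heq.symm⟩)
  · have hpos : 0 < (s.filter (f · = b)).card := by
      rw [h, if_pos (Finset.mem_coe.1 hb)]
      exact Nat.one_pos
    obtain ⟨a, ha⟩ := Finset.card_pos.1 hpos
    exact ⟨a, (Finset.mem_filter.1 ha).1, (Finset.mem_filter.1 ha).2⟩

lemma card_filter_eq_of_forall_sum_prod_pow_eq {σ α : Type*} [DecidableEq σ] {G₁ G₂ : Finset α}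
    {d₁ d₂ : α → σ →₀ ℕ}
    (h : ∀ N : σ → ℕ, 1 ≤ N → ∑ γ ∈ G₁, (d₁ γ).prod (fun w e => N w ^ e) =
      ∑ γ ∈ G₂, (d₂ γ).prod (fun w e => N w ^ e)) (d : σ →₀ ℕ) :
    (G₁.filter (d₁ · = d)).card = (G₂.filter (d₂ · = d)).card := by
  classical
  let P : Finset α → (α → σ →₀ ℕ) → MvPolynomial σ ℚ := fun G d' =>
    ∑ γ ∈ G, MvPolynomial.monomial (d' γ) 1
  have hcoeff : ∀ G d', MvPolynomial.coeff d (P G d') = (G.filter (d' · = d)).card := fun G d' => by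
    simp [P, MvPolynomial.coeff_sum, MvPolynomial.coeff_monomial, Finset.sum_boole]
  have heval : ∀ G d' (N : σ → ℕ), MvPolynomial.eval (fun w => (N w : ℚ)) (P G d') =
      ((∑ γ ∈ G, (d' γ).prod fun w e => N w ^ e : ℕ) : ℚ) := fun G d' N => by
    simp [P, MvPolynomial.eval_monomial, Finsupp.prod]
  have hP : P G₁ d₁ = P G₂ d₂ := by
    refine MvPolynomial.funext_set (fun _ => Set.range fun n : ℕ => ((n + 1 : ℕ) : ℚ))
      (fun _ => Set.infinite_range_of_injective fun m n hmn => by simpa using hmn)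
      fun x hx => ?_
    choose N hN using fun w => hx w (Set.mem_univ w)
    obtain rfl : x = fun w => ((N w + 1 : ℕ) : ℚ) := funext fun w => (hN w).symm
    rw [heval G₁ d₁ fun w => N w + 1, heval G₂ d₂ fun w => N w + 1, h _ fun w => Nat.succ_pos _]
  exact_mod_cast (hcoeff G₁ d₁).symm.trans ((congrArg (MvPolynomial.coeff d) hP).trans
    (hcoeff G₂ d₂))

namespace CQ

open Finset

variable {Rel : Type}

lemma mem_termListVars {l : List Term} {v : Var} :
    v ∈ termListVars l ↔ ∃ t ∈ l, v ∈ t.vars := by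
  induction l with
  | nil => simp [termListVars]
  | cons t l ih =>
    simp only [termListVars, List.foldr] at ih ⊢
    simp [ih]

lemma Term.eq_var_of_mem_vars {t : Term} {v : Var} (h : v ∈ t.vars) : t = .var v := by
  cases t <;> simp_all [Term.vars]

lemma Term.eval_congr {γ γ' : Var → ℚ} {t : Term} (h : ∀ v ∈ t.vars, γ v = γ' v) :
    t.eval γ = t.eval γ' := by
  cases t with
  | var v => exact h v (by simp [Term.vars])
  | const c => rfl

lemma Term.eval_rename (γ : Var → ℚ) (f : Var → Var) (t : Term) :
    (t.rename f).eval γ = t.eval (γ ∘ f) := by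
  cases t <;> rfl

lemma mem_atomsVars {R : Finset (Atom Rel)} {v : Var} :
    v ∈ atomsVars R ↔ ∃ a ∈ R, v ∈ a.vars := by
  simp [atomsVars, Finset.mem_sup]

lemma Atom.mem_vars_of_var_mem_args {a : Atom Rel} {v : Var} (h : Term.var v ∈ a.args) :
    v ∈ a.vars :=
  mem_termListVars.2 ⟨_, h, by simp [Term.vars]⟩

lemma Atom.vars_subset_atomsVars {R : Finset (Atom Rel)} {a : Atom Rel} (ha : a ∈ R) :
    a.vars ⊆ atomsVars R :=
  fun _ hv => mem_atomsVars.2 ⟨a, ha, hv⟩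

lemma exists_var_mem_args_of_mem_atomsVars {R : Finset (Atom Rel)} {v : Var}
    (h : v ∈ atomsVars R) : ∃ a ∈ R, Term.var v ∈ a.args := by
  obtain ⟨a, ha, hv⟩ := mem_atomsVars.1 h
  obtain ⟨t, ht, hvt⟩ := mem_termListVars.1 hv
  exact ⟨a, ha, Term.eq_var_of_mem_vars hvt ▸ ht⟩

lemma Atom.rename_rename (f g : Var → Var) (a : Atom Rel) :
    (a.rename g).rename f = a.rename (f ∘ g) := by
  have : Term.rename f ∘ Term.rename g = Term.rename (f ∘ g) := by
    funext t; cases t <;> rfl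
  simp [Atom.rename, List.map_map, this]

lemma Atom.rename_id (a : Atom Rel) : a.rename id = a := by
  have : Term.rename id = id := by
    funext t; cases t <;> rfl
  simp [Atom.rename, this]

lemma Atom.rename_injective {f : Var → Var} {g : Var → Var} (hgf : g ∘ f = id) :
    Function.Injective (Atom.rename f : Atom Rel → Atom Rel) :=
  Function.LeftInverse.injective (g := Atom.rename g) fun a => by
    rw [Atom.rename_rename, hgf, Atom.rename_id]

lemma Atom.rename_congr {f g : Var → Var} {a : Atom Rel} (h : ∀ v ∈ a.vars, f v = g v) :
    a.rename f = a.rename g := by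
  simp only [Atom.rename, Atom.mk.injEq, List.map_inj_left, true_and]
  intro t ht
  cases t with
  | var v => simp [Term.rename, h v (Atom.mem_vars_of_var_mem_args ht)]
  | const c => rfl

lemma Atom.vars_rename (f : Var → Var) (a : Atom Rel) :
    (a.rename f).vars = a.vars.image f := by
  ext v
  simp only [Atom.vars, Atom.rename, mem_termListVars, List.mem_map, Finset.mem_image]
  constructor
  · rintro ⟨_, ⟨t, ht, rfl⟩, hv⟩
    cases t with
    | var w =>
      obtain rfl : v = f w := by simpa [Term.rename, Term.vars] using hv
      exact ⟨w, ⟨_, ht, by simp [Term.vars]⟩, rfl⟩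
    | const c => simp [Term.rename, Term.vars] at hv
  · rintro ⟨w, ⟨t, ht, hw⟩, rfl⟩
    rw [Term.eq_var_of_mem_vars hw] at ht
    exact ⟨_, ⟨_, ht, rfl⟩, by simp [Term.rename, Term.vars]⟩

lemma atomsVars_image_rename [DecidableEq Rel] (f : Var → Var) (R : Finset (Atom Rel)) :
    atomsVars (R.image (Atom.rename f)) = (atomsVars R).image f := by
  ext v
  simp only [mem_atomsVars, Finset.mem_image]
  constructor
  · rintro ⟨_, ⟨a, ha, rfl⟩, hv⟩
    obtain ⟨w, hw, rfl⟩ := Finset.mem_image.1 (Atom.vars_rename f a ▸ hv)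
    exact ⟨w, ⟨a, ha, hw⟩, rfl⟩
  · rintro ⟨w, ⟨a, ha, hw⟩, rfl⟩
    exact ⟨_, ⟨a, ha, rfl⟩, Atom.vars_rename f a ▸ Finset.mem_image_of_mem f hw⟩

lemma Atom.satisfied_rename {D : Database Rel} {γ : Var → ℚ} {f : Var → Var} {a : Atom Rel} :
    (a.rename f).satisfied D γ ↔ a.satisfied D (γ ∘ f) := by
  simp only [Atom.satisfied, Atom.rename, List.map_map]
  have : Term.eval γ ∘ Term.rename f = Term.eval (γ ∘ f) := funext (Term.eval_rename γ f)
  rw [this]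

lemma Atom.satisfied_congr {D : Database Rel} {γ γ' : Var → ℚ} {a : Atom Rel}
    (h : ∀ v ∈ a.vars, γ v = γ' v) : a.satisfied D γ ↔ a.satisfied D γ' := by
  have : a.args.map (Term.eval γ) = a.args.map (Term.eval γ') :=
    List.map_congr_left fun t ht =>
      Term.eval_congr fun v hv => h v (mem_termListVars.2 ⟨t, ht, hv⟩)
  rw [Atom.satisfied, Atom.satisfied, this]

lemma IsRelational.body_vars {q : AggQuery Rel} (hr : IsRelational q) :
    q.body.vars = atomsVars q.body.atoms := by
  have hc : q.body.comps = ∅ := hr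
  simp [Body.vars, compsVars, hc]

lemma IsCountQuery.head_mem_atomsVars {q : AggQuery Rel} (hq : IsCountQuery q) {v : Var}
    (hv : v ∈ q.head) : v ∈ atomsVars q.body.atoms :=
  hq.2 v (by simp [hq.1, hv])

lemma IsRelational.satisfied_iff {q : AggQuery Rel} (hr : IsRelational q) {D : Database Rel}
    {γ : Var → ℚ} : q.body.satisfied D γ ↔ ∀ a ∈ q.body.atoms, a.satisfied D γ := by
  have hc : q.body.comps = ∅ := hr
  simp [Body.satisfied, holdsAll, hc]

lemma normalize_mem_group {q : AggQuery Rel} (hq : IsCountQuery q) (hr : IsRelational q)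
    {D : Database Rel} {γ : Var → ℚ} (hγ : q.body.satisfied D γ) :
    (fun v => if v ∈ q.body.vars then γ v else 0) ∈ group q D (q.head.map γ) := by
  rw [hr.body_vars]
  refine ⟨hr.satisfied_iff.2 fun a ha => ?_, fun v hv => ?_, ?_⟩
  · refine (Atom.satisfied_congr fun v hv => ?_).1 (hr.satisfied_iff.1 hγ a ha)
    simp [Atom.vars_subset_atomsVars ha hv]
  · simp [hr.body_vars ▸ hv]
  · exact List.map_congr_left fun v hv => by simp [hq.head_mem_atomsVars hv]

lemma group_finite {q : AggQuery Rel} (hr : IsRelational q) {D : Database Rel}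
    (hD : FiniteDB D) (t : List ℚ) : (group q D t).Finite := by
  let S := atomsVars q.body.atoms
  let vals : Set ℚ := ⋃ a ∈ (q.body.atoms : Set (Atom Rel)), ⋃ l ∈ D a.rel, {x | x ∈ l}
  have hvals : vals.Finite :=
    q.body.atoms.finite_toSet.biUnion fun a _ => (hD a.rel).biUnion fun l _ => l.finite_toSet
  have hrestrict : Set.InjOn (fun (γ : Var → ℚ) (v : S) => γ v) (group q D t) := by
    intro γ hγ γ' hγ' h
    funext v
    by_cases hv : v ∈ S
    · exact congrFun h ⟨v, hv⟩
    · rw [hγ.2.1 v (hr.body_vars ▸ hv), hγ'.2.1 v (hr.body_vars ▸ hv)]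
  refine Set.Finite.of_finite_image ((Set.Finite.pi' fun _ : S => hvals).subset ?_) hrestrict
  rintro _ ⟨γ, hγ, rfl⟩ v
  obtain ⟨a, ha, hva⟩ := exists_var_mem_args_of_mem_atomsVars v.2
  simp only [vals, Set.mem_iUnion]
  exact ⟨a, ha, _, hr.satisfied_iff.1 hγ.1 a ha, List.mem_map_of_mem (f := Term.eval γ) hva⟩

lemma mem_result_iff {q : AggQuery Rel} (hq : IsCountQuery q) (hr : IsRelational q)
    {D : Database Rel} (hD : FiniteDB D) {t : List ℚ} {c : ℚ} :
    (t, c) ∈ q.result D ↔ (group q D t).Nonempty ∧ c = (group q D t).ncard := by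
  have hcount : ∑ᶠ γ ∈ group q D t, (q.aggVars.map γ).prod = (group q D t).ncard := by
    have hfin := group_finite hr hD t
    simp [hq.1, finsum_mem_eq_finite_toFinset_sum _ hfin, Set.ncard_eq_toFinset_card _ hfin]
  simp only [AggQuery.result, Set.mem_ofPred_eq, hcount]
  constructor
  · rintro ⟨γ, hγ, rfl, rfl⟩
    exact ⟨⟨_, normalize_mem_group hq hr hγ⟩, rfl⟩
  · rintro ⟨⟨γ, hγ⟩, rfl⟩
    exact ⟨γ, hγ.1, hγ.2.2.symm, rfl⟩

lemma ncard_group_eq_of_equiv {q q' : AggQuery Rel} (hq : IsCountQuery q)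
    (hq' : IsCountQuery q') (hr : IsRelational q) (hr' : IsRelational q') (h : q.equiv q')
    (D : Database Rel) (hD : FiniteDB D) (t : List ℚ) :
    (group q D t).ncard = (group q' D t).ncard := by
  have key : ∀ c : ℚ, ((group q D t).Nonempty ∧ c = (group q D t).ncard) ↔
      ((group q' D t).Nonempty ∧ c = (group q' D t).ncard) := fun c => by
    rw [← mem_result_iff hq hr hD, ← mem_result_iff hq' hr' hD, h D hD]
  by_cases hne : (group q D t).Nonempty
  · exact_mod_cast ((key _).1 ⟨hne, rfl⟩).2
  · have hne' : ¬(group q' D t).Nonempty := fun hne' => hne ((key _).2 ⟨hne', rfl⟩).1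
    rw [Set.not_nonempty_iff_eq_empty.1 hne, Set.not_nonempty_iff_eq_empty.1 hne']

def IsIsomorphism [DecidableEq Rel] (e : Var ≃ Var) (q q' : AggQuery Rel) : Prop :=
  q.head.map e = q'.head ∧ q.body.atoms.image (Atom.rename e) = q'.body.atoms

namespace IsIsomorphism

variable [DecidableEq Rel] {e : Var ≃ Var} {q q' : AggQuery Rel}

lemma symm (h : IsIsomorphism e q q') : IsIsomorphism e.symm q' q := by
  refine ⟨by simp [← h.1, List.map_map], ?_⟩
  have : Atom.rename e.symm ∘ Atom.rename e = (id : Atom Rel → Atom Rel) := funext fun a => by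
    rw [Function.comp_apply, Atom.rename_rename, e.symm_comp_self, Atom.rename_id, id]
  rw [← h.2, Finset.image_image, this, Finset.image_id]

lemma comp_symm_mem_group (h : IsIsomorphism e q q') (hr : IsRelational q)
    (hr' : IsRelational q') {D : Database Rel} {t : List ℚ} {γ : Var → ℚ}
    (hγ : γ ∈ group q D t) : γ ∘ e.symm ∈ group q' D t := by
  refine ⟨hr'.satisfied_iff.2 fun a' ha' => ?_, fun v hv => hγ.2.1 _ fun hmem => hv ?_, ?_⟩
  · obtain ⟨a, ha, rfl⟩ := Finset.mem_image.1 (h.2 ▸ ha')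
    rw [Atom.satisfied_rename, Function.comp_assoc, e.symm_comp_self, Function.comp_id]
    exact hr.satisfied_iff.1 hγ.1 a ha
  · rw [hr'.body_vars, ← h.2, atomsVars_image_rename, ← hr.body_vars]
    exact Finset.mem_image.2 ⟨_, hmem, e.apply_symm_apply v⟩
  · rw [← h.1, List.map_map, Function.comp_assoc, e.symm_comp_self, Function.comp_id]
    exact hγ.2.2

lemma group_eq_image (h : IsIsomorphism e q q') (hr : IsRelational q)
    (hr' : IsRelational q') (D : Database Rel) (t : List ℚ) :
    group q' D t = (· ∘ e.symm) '' group q D t := by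
  ext γ'
  refine ⟨fun hγ' => ⟨γ' ∘ e, h.symm.comp_symm_mem_group hr' hr hγ', ?_⟩, ?_⟩
  · simp [Function.comp_assoc]
  · rintro ⟨γ, hγ, rfl⟩
    exact h.comp_symm_mem_group hr hr' hγ

lemma equiv (h : IsIsomorphism e q q') (hq : IsCountQuery q) (hq' : IsCountQuery q')
    (hr : IsRelational q) (hr' : IsRelational q') : q.equiv q' := by
  intro D hD
  have hinj : Function.Injective (· ∘ e.symm : (Var → ℚ) → Var → ℚ) := fun γ₁ γ₂ h₁₂ => by
    funext x
    simpa using congrFun h₁₂ (e x)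
  ext ⟨t, c⟩
  rw [mem_result_iff hq hr hD, mem_result_iff hq' hr' hD, h.group_eq_image hr hr',
    Set.image_nonempty, Set.ncard_image_of_injective _ hinj]

end IsIsomorphism

def atomsConsts (R : Finset (Atom Rel)) : Finset ℚ :=
  R.sup fun a => a.args.toFinset.biUnion Term.consts

lemma Term.consts_subset_atomsConsts {R : Finset (Atom Rel)} {a : Atom Rel} (ha : a ∈ R)
    {t : Term} (ht : t ∈ a.args) : t.consts ⊆ atomsConsts R :=
  fun _ hc => Finset.mem_sup.2 ⟨a, ha, Finset.mem_biUnion.2 ⟨t, List.mem_toFinset.2 ht, hc⟩⟩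

/-- Values used to freeze variables (`κ (w, 0)`) and to blow them up (`κ (w, i)`). They avoid
the constants in `K` and the value `0` that `group` assigns outside the body. -/
structure FreshValues (K : Finset ℚ) where
  toFun : Var × ℕ → ℚ
  injective : Function.Injective toFun
  notMem : ∀ p, toFun p ∉ K
  ne_zero : ∀ p, toFun p ≠ 0

namespace FreshValues

variable {K : Finset ℚ}

instance : CoeFun (FreshValues K) fun _ => Var × ℕ → ℚ := ⟨toFun⟩

lemma nonempty (K : Finset ℚ) : Nonempty (FreshValues K) := by
  let e := ((insert 0 K).finite_toSet.infinite_compl).natEmbedding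
  have he : ∀ n, (e n : ℚ) ∉ insert 0 K := fun n => (e n).2
  refine ⟨⟨fun p => e (Nat.pair p.1 p.2), fun p p' h => ?_, fun p => ?_, fun p => ?_⟩⟩
  · simpa using Nat.pairEquiv.injective (e.injective (Subtype.ext h))
  · exact fun h => he _ (Finset.mem_insert_of_mem h)
  · exact fun h => he (Nat.pair p.1 p.2) (by simp [h])

variable (κ : FreshValues K)

noncomputable def var (x : ℚ) : Var := (Function.invFun κ x).1

open Classical in
noncomputable def collapse (x : ℚ) : ℚ := if x ∈ Set.range κ then κ (κ.var x, 0) else x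

@[simp]
lemma var_apply (w : Var) (i : ℕ) : κ.var (κ (w, i)) = w := by
  simp [var, Function.leftInverse_invFun κ.injective (w, i)]

@[simp]
lemma collapse_apply (w : Var) (i : ℕ) : κ.collapse (κ (w, i)) = κ (w, 0) := by
  simp [collapse]

lemma collapse_of_notMem_range {x : ℚ} (hx : x ∉ Set.range κ) : κ.collapse x = x := by
  simp [collapse, hx]

lemma collapse_of_mem {x : ℚ} (hx : x ∈ K) : κ.collapse x = x :=
  κ.collapse_of_notMem_range fun ⟨p, hp⟩ => κ.notMem p (hp ▸ hx)

@[simp]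
lemma collapse_zero : κ.collapse 0 = 0 :=
  κ.collapse_of_notMem_range fun ⟨p, hp⟩ => κ.ne_zero p hp

def IsCopy (N : Var → ℕ) : Term → ℚ → Prop
  | .var w, x => ∃ i < N w, x = κ (w, i)
  | .const c, x => x = c

lemma isCopy_one_var {w : Var} {x : ℚ} : κ.IsCopy 1 (.var w) x ↔ x = κ (w, 0) := by
  simp [IsCopy]

variable {κ} in
lemma IsCopy.mono {N N' : Var → ℕ} (hN : N ≤ N') {s : Term} {x : ℚ} (h : κ.IsCopy N s x) :
    κ.IsCopy N' s x := by
  cases s with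
  | var w =>
    obtain ⟨i, hi, rfl⟩ := h
    exact ⟨i, hi.trans_le (hN w), rfl⟩
  | const c => exact h

variable {κ} in
lemma IsCopy.collapse {N : Var → ℕ} {s : Term} {x : ℚ} (hs : s.consts ⊆ K)
    (h : κ.IsCopy N s x) : κ.IsCopy 1 s (κ.collapse x) := by
  cases s with
  | var w =>
    obtain ⟨i, -, rfl⟩ := h
    simp [isCopy_one_var]
  | const c =>
    obtain rfl : x = c := h
    exact κ.collapse_of_mem (hs (Finset.mem_singleton_self x))

lemma setOf_isCopy_var (N : Var → ℕ) (w : Var) :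
    {x | κ.IsCopy N (.var w) x} = ((Finset.range (N w)).image fun i => κ (w, i) : Set ℚ) := by
  ext x
  simp [IsCopy, eq_comm]

lemma ncard_setOf_isCopy_var (N : Var → ℕ) (w : Var) :
    {x | κ.IsCopy N (.var w) x}.ncard = N w := by
  rw [setOf_isCopy_var, Set.ncard_coe_finset, Finset.card_image_of_injective _ fun i j h => by
    simpa using κ.injective h, Finset.card_range]

lemma finite_setOf_isCopy (N : Var → ℕ) (s : Term) : {x | κ.IsCopy N s x}.Finite := by
  cases s with
  | var w => exact κ.setOf_isCopy_var N w ▸ Finset.finite_toSet _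
  | const c => exact (Set.finite_singleton c).subset fun x hx => hx

end FreshValues

section BlowUp

variable {K : Finset ℚ}

/-- The canonical database of `q` with every variable `w` blown up to its `N w` copies; for
`N = 1` this is the canonical database of `q`. -/
def blowUp (q : AggQuery Rel) (κ : FreshValues K) (N : Var → ℕ) : Database Rel :=
  fun p => {l | ∃ a ∈ q.body.atoms, a.rel = p ∧ List.Forall₂ (κ.IsCopy N) a.args l}

def frozenHead (q : AggQuery Rel) (κ : FreshValues K) : List ℚ := q.head.map fun v => κ (v, 0)

def frozen (q : AggQuery Rel) (κ : FreshValues K) (v : Var) : ℚ :=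
  if v ∈ atomsVars q.body.atoms then κ (v, 0) else 0

def freeVars (q : AggQuery Rel) (K : Finset ℚ) (γ : Var → ℚ) : Finset Var :=
  (ndv q).filter (γ · ∉ K)

lemma blowUp_finite (q : AggQuery Rel) (κ : FreshValues K) (N : Var → ℕ) :
    FiniteDB (blowUp q κ N) := fun _ =>
  (q.body.atoms.finite_toSet.biUnion fun a _ =>
    List.finite_setOf_forall₂ (κ.finite_setOf_isCopy N) a.args).subset
    fun _ ⟨_, ha, _, hl⟩ => Set.mem_biUnion ha hl

variable {qA qB : AggQuery Rel} {κ : FreshValues K}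

lemma frozen_mem_group (hqA : IsCountQuery qA) (hrA : IsRelational qA) :
    frozen qA κ ∈ group qA (blowUp qA κ 1) (frozenHead qA κ) := by
  refine ⟨hrA.satisfied_iff.2 fun a ha => ⟨a, ha, rfl, ?_⟩, fun v hv => ?_, ?_⟩
  · rw [List.forall₂_map_right_iff, List.forall₂_same]
    intro s hs
    cases s with
    | var v =>
      simp [κ.isCopy_one_var, Term.eval, frozen,
        Atom.vars_subset_atomsVars ha (Atom.mem_vars_of_var_mem_args hs)]
    | const c => rfl
  · simp [frozen, ← hrA.body_vars, hv]
  · exact List.map_congr_left fun v hv => by simp [frozen, hqA.head_mem_atomsVars hv]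

lemma exists_eq_of_mem_head {D : Database Rel} {γ : Var → ℚ}
    (hγ : γ ∈ group qB D (frozenHead qA κ)) {v : Var} (hv : v ∈ qB.head) :
    ∃ u ∈ qA.head, γ v = κ (u, 0) := by
  have : γ v ∈ frozenHead qA κ := hγ.2.2 ▸ List.mem_map_of_mem hv
  obtain ⟨u, hu, he⟩ := List.mem_map.1 this
  exact ⟨u, hu, he.symm⟩

lemma exists_isCopy_of_mem_group (hKA : atomsConsts qA.body.atoms ⊆ K) {N : Var → ℕ}
    {t : List ℚ} {γ : Var → ℚ} (hγ : γ ∈ group qB (blowUp qA κ N) t) {v : Var}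
    (hv : v ∈ atomsVars qB.body.atoms) (hvK : γ v ∉ K) : ∃ w, κ.IsCopy N (.var w) (γ v) := by
  obtain ⟨b, hb, hvb⟩ := exists_var_mem_args_of_mem_atomsVars hv
  obtain ⟨a, ha, -, hF⟩ := hγ.1.1 b hb
  obtain ⟨s, hs, hsv⟩ := hF.exists_mem_left _ (List.mem_map_of_mem (f := Term.eval γ) hvb)
  cases s with
  | var w => exact ⟨w, hsv⟩
  | const c =>
    obtain rfl : γ v = c := hsv
    exact absurd (hKA (Term.consts_subset_atomsConsts ha hs (Finset.mem_singleton_self _))) hvK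

lemma Term.eval_collapse {t : Term} (ht : t.consts ⊆ K) (γ : Var → ℚ) :
    t.eval (κ.collapse ∘ γ) = κ.collapse (t.eval γ) := by
  cases t with
  | var v => rfl
  | const c => exact (κ.collapse_of_mem (ht (Finset.mem_singleton_self c))).symm

lemma collapse_comp_mem_group (hrB : IsRelational qB) (hKA : atomsConsts qA.body.atoms ⊆ K)
    (hKB : atomsConsts qB.body.atoms ⊆ K) {N : Var → ℕ} {γ : Var → ℚ}
    (hγ : γ ∈ group qB (blowUp qA κ N) (frozenHead qA κ)) :
    κ.collapse ∘ γ ∈ group qB (blowUp qA κ 1) (frozenHead qA κ) := by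
  refine ⟨hrB.satisfied_iff.2 fun b hb => ?_, fun v hv => by simp [hγ.2.1 v hv], ?_⟩
  · obtain ⟨a, ha, hab, hF⟩ := hγ.1.1 b hb
    refine ⟨a, ha, hab, ?_⟩
    have hcomm : b.args.map (Term.eval (κ.collapse ∘ γ)) =
        (b.args.map (Term.eval γ)).map κ.collapse := by
      rw [List.map_map]
      exact List.map_congr_left fun t ht =>
        Term.eval_collapse ((Term.consts_subset_atomsConsts hb ht).trans hKB) γ
    rw [hcomm, List.forall₂_map_right_iff]
    exact hF.imp_of_mem fun s hs _ _ h =>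
      h.collapse ((Term.consts_subset_atomsConsts ha hs).trans hKA)
  · rw [← List.map_map, hγ.2.2, frozenHead, List.map_map]
    exact List.map_congr_left fun u _ => κ.collapse_apply u 0

lemma mem_freeVars_iff (hr : IsRelational qB) {γ : Var → ℚ} {v : Var} :
    v ∈ freeVars qB K γ ↔ v ∈ atomsVars qB.body.atoms ∧ v ∉ qB.head ∧ γ v ∉ K := by
  simp [freeVars, ndv, hr.body_vars, and_assoc]

/-- The multidegree, in the blow-up factors `N w`, of the number of assignments collapsing
to `γ`. -/
noncomputable def FreshValues.fiberDegree (κ : FreshValues K) (q : AggQuery Rel)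
    (γ : Var → ℚ) : Var →₀ ℕ :=
  ∑ v ∈ freeVars q K γ, Finsupp.single (κ.var (γ v)) 1

lemma FreshValues.fiberDegree_prod_pow (κ : FreshValues K) (q : AggQuery Rel) (γ : Var → ℚ)
    (N : Var → ℕ) :
    (κ.fiberDegree q γ).prod (fun w e => N w ^ e) = ∏ v ∈ freeVars q K γ, N (κ.var (γ v)) := by
  rw [fiberDegree, ← Finsupp.prod_finsetSum_index (by simp) (by simp [pow_add])]
  simp [Finsupp.prod_single_index]

lemma FreshValues.fiberDegree_apply (κ : FreshValues K) (q : AggQuery Rel) (γ : Var → ℚ)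
    (w : Var) : κ.fiberDegree q γ w = #{v ∈ freeVars q K γ | κ.var (γ v) = w} := by
  simp [fiberDegree, Finsupp.finsetSum_apply, Finsupp.single_apply, Finset.sum_boole]

variable {γ₀ : Var → ℚ}

lemma collapse_apply_of_mem_group (hrB : IsRelational qB)
    (hKA : atomsConsts qA.body.atoms ⊆ K) {t : List ℚ}
    (hγ₀ : γ₀ ∈ group qB (blowUp qA κ 1) t) (x : Var) : κ.collapse (γ₀ x) = γ₀ x := by
  by_cases hx : x ∈ atomsVars qB.body.atoms
  · by_cases hxK : γ₀ x ∈ K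
    · exact κ.collapse_of_mem hxK
    · obtain ⟨w, hw⟩ := exists_isCopy_of_mem_group hKA hγ₀ hx hxK
      rw [κ.isCopy_one_var.1 hw, κ.collapse_apply]
  · rw [hγ₀.2.1 x (hrB.body_vars ▸ hx), κ.collapse_zero]

lemma eq_of_mem_freeVars (hrB : IsRelational qB) (hKA : atomsConsts qA.body.atoms ⊆ K)
    {t : List ℚ} (hγ₀ : γ₀ ∈ group qB (blowUp qA κ 1) t) {v : Var}
    (hv : v ∈ freeVars qB K γ₀) : γ₀ v = κ (κ.var (γ₀ v), 0) := by
  obtain ⟨hvS, -, hvK⟩ := (mem_freeVars_iff hrB).1 hv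
  obtain ⟨w, hw⟩ := exists_isCopy_of_mem_group hKA hγ₀ hvS hvK
  rw [κ.isCopy_one_var.1 hw, κ.var_apply]

lemma isCopy_of_collapse_comp_eq (hrB : IsRelational qB) (hKA : atomsConsts qA.body.atoms ⊆ K)
    {N : Var → ℕ} {γ : Var → ℚ} (hγ : γ ∈ group qB (blowUp qA κ N) (frozenHead qA κ))
    (hcol : κ.collapse ∘ γ = γ₀) :
    (∀ v ∈ freeVars qB K γ₀, κ.IsCopy N (.var (κ.var (γ₀ v))) (γ v)) ∧
      ∀ v ∉ freeVars qB K γ₀, γ v = γ₀ v := by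
  have hcol' : ∀ v, κ.collapse (γ v) = γ₀ v := congrFun hcol
  refine ⟨fun v hv => ?_, fun v hv => ?_⟩
  · obtain ⟨hvS, -, hvK⟩ := (mem_freeVars_iff hrB).1 hv
    have hγK : γ v ∉ K := fun h => hvK (by rwa [← hcol' v, κ.collapse_of_mem h])
    obtain ⟨w, i, hi, hw⟩ := exists_isCopy_of_mem_group hKA hγ hvS hγK
    rw [← hcol' v, hw, κ.collapse_apply, κ.var_apply]
    exact ⟨i, hi, rfl⟩
  · rw [← hcol' v]
    by_cases hrange : γ v ∈ Set.range κ
    · obtain ⟨⟨w, i⟩, hw⟩ := hrange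
      by_cases hH : v ∈ qB.head
      · obtain ⟨u, -, hu⟩ := exists_eq_of_mem_head hγ hH
        rw [hu, κ.collapse_apply]
      · refine absurd ((mem_freeVars_iff hrB).2 ⟨by_contra fun hvS => ?_, hH, ?_⟩) hv
        · exact κ.ne_zero (w, i) (hw.trans (hγ.2.1 v (hrB.body_vars ▸ hvS)))
        · rw [← hcol' v, ← hw]
          exact κ.collapse_apply w i ▸ κ.notMem (w, 0)
    · exact (κ.collapse_of_notMem_range hrange).symm

lemma mem_group_blowUp_of_isCopy (hrB : IsRelational qB) (hKA : atomsConsts qA.body.atoms ⊆ K)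
    {N : Var → ℕ} (hN : 1 ≤ N) (hγ₀ : γ₀ ∈ group qB (blowUp qA κ 1) (frozenHead qA κ))
    {γ : Var → ℚ} (hcopy : ∀ v ∈ freeVars qB K γ₀, κ.IsCopy N (.var (κ.var (γ₀ v))) (γ v))
    (heq : ∀ v ∉ freeVars qB K γ₀, γ v = γ₀ v) :
    γ ∈ group qB (blowUp qA κ N) (frozenHead qA κ) := by
  have hheq : ∀ v, v ∉ atomsVars qB.body.atoms ∨ v ∈ qB.head → γ v = γ₀ v := fun v hv =>
    heq v fun h => by have := (mem_freeVars_iff hrB).1 h; tauto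
  refine ⟨hrB.satisfied_iff.2 fun b hb => ?_, fun v hv => ?_, ?_⟩
  · obtain ⟨a, ha, hab, hF⟩ := hγ₀.1.1 b hb
    refine ⟨a, ha, hab, ?_⟩
    rw [List.forall₂_map_right_iff] at hF ⊢
    refine hF.imp_of_mem fun s hs t _ h => ?_
    by_cases ht : ∃ v ∈ freeVars qB K γ₀, t = .var v
    · obtain ⟨v, hv, rfl⟩ := ht
      cases s with
      | var w =>
        have h : γ₀ v = κ (w, 0) := κ.isCopy_one_var.1 h
        obtain rfl : κ.var (γ₀ v) = w := by rw [h, κ.var_apply]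
        exact hcopy v hv
      | const c =>
        obtain rfl : γ₀ v = c := h
        exact absurd (hKA (Term.consts_subset_atomsConsts ha hs (Finset.mem_singleton_self _)))
          ((mem_freeVars_iff hrB).1 hv).2.2
    · have : t.eval γ = t.eval γ₀ := by
        cases t with
        | var v => exact heq v fun hv => ht ⟨v, hv, rfl⟩
        | const c => rfl
      exact this ▸ h.mono hN
  · rw [hheq v (.inl (hrB.body_vars ▸ hv)), hγ₀.2.1 v hv]
  · rw [← hγ₀.2.2]
    exact List.map_congr_left fun v hv => hheq v (.inr hv)

lemma ncard_fiber (hrB : IsRelational qB) (hKA : atomsConsts qA.body.atoms ⊆ K)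
    {N : Var → ℕ} (hN : 1 ≤ N) (hγ₀ : γ₀ ∈ group qB (blowUp qA κ 1) (frozenHead qA κ)) :
    {γ | γ ∈ group qB (blowUp qA κ N) (frozenHead qA κ) ∧ κ.collapse ∘ γ = γ₀}.ncard =
      ∏ v ∈ freeVars qB K γ₀, N (κ.var (γ₀ v)) := by
  have hfiber : {γ | γ ∈ group qB (blowUp qA κ N) (frozenHead qA κ) ∧ κ.collapse ∘ γ = γ₀} =
      {γ | (∀ v ∈ freeVars qB K γ₀, γ v ∈ {x | κ.IsCopy N (.var (κ.var (γ₀ v))) x}) ∧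
        ∀ v ∉ freeVars qB K γ₀, γ v = γ₀ v} := by
    ext γ
    refine ⟨fun ⟨hγ, hcol⟩ => isCopy_of_collapse_comp_eq hrB hKA hγ hcol,
      fun ⟨hcopy, heq⟩ => ⟨mem_group_blowUp_of_isCopy hrB hKA hN hγ₀ hcopy heq, ?_⟩⟩
    funext v
    by_cases hv : v ∈ freeVars qB K γ₀
    · obtain ⟨i, -, hi⟩ := hcopy v hv
      rw [Function.comp_apply, hi, κ.collapse_apply, ← eq_of_mem_freeVars hrB hKA hγ₀ hv]
    · rw [Function.comp_apply, heq v hv, collapse_apply_of_mem_group hrB hKA hγ₀]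
  rw [hfiber, ncard_setOf_mem_on_eq_off]
  exact Finset.prod_congr rfl fun v _ => κ.ncard_setOf_isCopy_var N _

lemma ncard_group_blowUp (hrB : IsRelational qB) (hKA : atomsConsts qA.body.atoms ⊆ K)
    (hKB : atomsConsts qB.body.atoms ⊆ K) {N : Var → ℕ} (hN : 1 ≤ N) :
    (group qB (blowUp qA κ N) (frozenHead qA κ)).ncard =
      ∑ γ₀ ∈ (group_finite hrB (blowUp_finite qA κ 1) (frozenHead qA κ)).toFinset,
        (κ.fiberDegree qB γ₀).prod fun w e => N w ^ e := by
  classical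
  have hfin := group_finite hrB (blowUp_finite qA κ N) (frozenHead qA κ)
  have hfin₁ := group_finite hrB (blowUp_finite qA κ 1) (frozenHead qA κ)
  rw [Set.ncard_eq_toFinset_card _ hfin, Finset.card_eq_sum_card_fiberwise fun γ hγ =>
    hfin₁.mem_toFinset.2 <| collapse_comp_mem_group hrB hKA hKB <| hfin.mem_toFinset.1 hγ]
  refine Finset.sum_congr rfl fun γ₀ hγ₀ => ?_
  rw [κ.fiberDegree_prod_pow, ← ncard_fiber hrB hKA hN (hfin₁.mem_toFinset.1 hγ₀),
    Set.ncard_eq_toFinset_card _ (hfin.subset fun γ hγ => hγ.1)]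
  congr 1
  ext γ
  simp

lemma freeVars_frozen (hr : IsRelational qA) : freeVars qA K (frozen qA κ) = ndv qA :=
  Finset.filter_true_of_mem fun v hv => by
    simp [frozen, ← hr.body_vars, (Finset.mem_sdiff.1 hv).1, κ.notMem]

lemma card_filter_var_frozen_eq (hr : IsRelational qA) (w : Var) :
    #{v ∈ freeVars qA K (frozen qA κ) | κ.var (frozen qA κ v) = w} =
      if w ∈ ndv qA then 1 else 0 := by
  have : {v ∈ freeVars qA K (frozen qA κ) | κ.var (frozen qA κ v) = w} = {v ∈ ndv qA | v = w} := by
    rw [freeVars_frozen hr]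
    refine Finset.filter_congr fun v hv => ?_
    simp [frozen, ← hr.body_vars, (Finset.mem_sdiff.1 hv).1]
  rw [this, Finset.filter_eq']
  split_ifs <;> simp

lemma exists_mem_group_bijOn_freeVars (hqA : IsCountQuery qA) (hrA : IsRelational qA)
    (hrB : IsRelational qB) (hKA : atomsConsts qA.body.atoms ⊆ K)
    (hKB : atomsConsts qB.body.atoms ⊆ K) (κ : FreshValues K)
    (hcount : ∀ D, FiniteDB D → ∀ t, (group qA D t).ncard = (group qB D t).ncard) :
    ∃ γ₀ ∈ group qB (blowUp qA κ 1) (frozenHead qA κ),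
      Set.BijOn (κ.var ∘ γ₀) (freeVars qB K γ₀) (ndv qA) := by
  have hfinA := group_finite hrA (blowUp_finite qA κ 1) (frozenHead qA κ)
  have hfinB := group_finite hrB (blowUp_finite qA κ 1) (frozenHead qA κ)
  have hsum := card_filter_eq_of_forall_sum_prod_pow_eq (G₁ := hfinA.toFinset)
    (G₂ := hfinB.toFinset) (d₁ := κ.fiberDegree qA) (d₂ := κ.fiberDegree qB) (fun N hN => by
      rw [← ncard_group_blowUp (κ := κ) hrA hKA hKA hN, ← ncard_group_blowUp hrB hKA hKB hN,
        hcount _ (blowUp_finite qA κ N)]) (κ.fiberDegree qA (frozen qA κ))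
  have hpos : 0 < #{γ ∈ hfinA.toFinset | κ.fiberDegree qA γ = κ.fiberDegree qA (frozen qA κ)} :=
    Finset.card_pos.2
      ⟨_, Finset.mem_filter.2 ⟨hfinA.mem_toFinset.2 (frozen_mem_group hqA hrA), rfl⟩⟩
  obtain ⟨γ₀, hγ₀⟩ := Finset.card_pos.1 (hsum ▸ hpos)
  obtain ⟨hγ₀B, hdeg⟩ := Finset.mem_filter.1 hγ₀
  refine ⟨γ₀, hfinB.mem_toFinset.1 hγ₀B, Finset.bijOn_of_card_filter_eq fun w => ?_⟩
  simp only [Function.comp_apply]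
  rw [← card_filter_var_frozen_eq hrA w, ← κ.fiberDegree_apply, ← κ.fiberDegree_apply, hdeg]

lemma map_var_comp_head {D : Database Rel} (hγ₀ : γ₀ ∈ group qB D (frozenHead qA κ)) :
    qB.head.map (κ.var ∘ γ₀) = qA.head := by
  rw [← List.map_map, hγ₀.2.2, frozenHead, List.map_map]
  simp [Function.comp_def]

lemma eq_frozen_of_freeVars_eq (hrB : IsRelational qB) (hKA : atomsConsts qA.body.atoms ⊆ K)
    (hγ₀ : γ₀ ∈ group qB (blowUp qA κ 1) (frozenHead qA κ)) (hfree : freeVars qB K γ₀ = ndv qB)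
    {v : Var} (hv : v ∈ atomsVars qB.body.atoms) : γ₀ v = κ (κ.var (γ₀ v), 0) := by
  by_cases hH : v ∈ qB.head
  · obtain ⟨u, -, hu⟩ := exists_eq_of_mem_head hγ₀ hH
    rw [hu, κ.var_apply]
  · refine eq_of_mem_freeVars hrB hKA hγ₀ (hfree ▸ Finset.mem_sdiff.2 ⟨?_, ?_⟩)
    · exact hrB.body_vars ▸ hv
    · simpa using hH

lemma eq_rename_of_isCopy_one {s t : Term} (hs : s.consts ⊆ K) (ht : t.consts ⊆ K)
    (hfrozen : ∀ v ∈ t.vars, γ₀ v = κ (κ.var (γ₀ v), 0)) (h : κ.IsCopy 1 s (t.eval γ₀)) :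
    s = t.rename (κ.var ∘ γ₀) := by
  cases t with
  | var v =>
    have hv := hfrozen v (Finset.mem_singleton_self v)
    cases s with
    | var w =>
      have h : γ₀ v = κ (w, 0) := κ.isCopy_one_var.1 h
      simp [Term.rename, h]
    | const c =>
      obtain rfl : γ₀ v = c := h
      exact absurd (hs (Finset.mem_singleton_self _)) (hv ▸ κ.notMem _)
  | const c =>
    cases s with
    | var w =>
      have h : c = κ (w, 0) := κ.isCopy_one_var.1 h
      exact absurd (ht (Finset.mem_singleton_self _)) (h ▸ κ.notMem _)
    | const c' =>
      obtain rfl : c = c' := h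
      rfl

lemma rename_var_comp_mem (hKA : atomsConsts qA.body.atoms ⊆ K)
    (hKB : atomsConsts qB.body.atoms ⊆ K) {t : List ℚ} (hγ₀ : γ₀ ∈ group qB (blowUp qA κ 1) t)
    (hfrozen : ∀ v ∈ atomsVars qB.body.atoms, γ₀ v = κ (κ.var (γ₀ v), 0))
    {b : Atom Rel} (hb : b ∈ qB.body.atoms) : b.rename (κ.var ∘ γ₀) ∈ qA.body.atoms := by
  obtain ⟨a, ha, hab, hF⟩ := hγ₀.1.1 b hb
  rw [List.forall₂_map_right_iff] at hF
  have hargs : a.args = b.args.map (Term.rename (κ.var ∘ γ₀)) := by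
    rw [← List.forall₂_eq_eq_eq, List.forall₂_map_right_iff]
    exact hF.imp_of_mem fun s hs t ht => eq_rename_of_isCopy_one
      ((Term.consts_subset_atomsConsts ha hs).trans hKA)
      ((Term.consts_subset_atomsConsts hb ht).trans hKB)
      fun v hv => hfrozen v (Atom.vars_subset_atomsVars hb (mem_termListVars.2 ⟨t, ht, hv⟩))
  have hba : b.rename (κ.var ∘ γ₀) = a := by
    rw [Atom.rename, ← hargs, ← hab]
  exact hba ▸ ha

end BlowUp

structure IsNdvBijHom (f : Var → Var) (q q' : AggQuery Rel) : Prop where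
  map_head : q.head.map f = q'.head
  rename_mem : ∀ a ∈ q.body.atoms, a.rename f ∈ q'.body.atoms
  bijOn_ndv : Set.BijOn f (ndv q) (ndv q')

lemma card_ndv_le_of_ncard_group_eq {qA qB : AggQuery Rel} (hqA : IsCountQuery qA)
    (hrA : IsRelational qA) (hrB : IsRelational qB)
    (hcount : ∀ D, FiniteDB D → ∀ t, (group qA D t).ncard = (group qB D t).ncard) :
    #(ndv qA) ≤ #(ndv qB) := by
  obtain ⟨κ⟩ := FreshValues.nonempty (atomsConsts qA.body.atoms ∪ atomsConsts qB.body.atoms)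
  obtain ⟨γ₀, -, hbij⟩ := exists_mem_group_bijOn_freeVars hqA hrA hrB
    Finset.subset_union_left Finset.subset_union_right κ hcount
  rw [← Set.BijOn.finsetCard_eq _ hbij]
  exact Finset.card_le_card (Finset.filter_subset _ _)

lemma exists_isNdvBijHom_of_ncard_group_eq {qA qB : AggQuery Rel} (hqA : IsCountQuery qA)
    (hrA : IsRelational qA) (hrB : IsRelational qB)
    (hcount : ∀ D, FiniteDB D → ∀ t, (group qA D t).ncard = (group qB D t).ncard)
    (hle : #(ndv qB) ≤ #(ndv qA)) : ∃ f, IsNdvBijHom f qB qA := by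
  obtain ⟨κ⟩ := FreshValues.nonempty (atomsConsts qA.body.atoms ∪ atomsConsts qB.body.atoms)
  have hKA : atomsConsts qA.body.atoms ⊆ atomsConsts qA.body.atoms ∪ atomsConsts qB.body.atoms :=
    Finset.subset_union_left
  have hKB : atomsConsts qB.body.atoms ⊆ atomsConsts qA.body.atoms ∪ atomsConsts qB.body.atoms :=
    Finset.subset_union_right
  obtain ⟨γ₀, hγ₀, hbij⟩ := exists_mem_group_bijOn_freeVars hqA hrA hrB hKA hKB κ hcount
  have hfree : freeVars qB _ γ₀ = ndv qB := Finset.eq_of_subset_of_card_le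
    (Finset.filter_subset _ _) (Set.BijOn.finsetCard_eq _ hbij ▸ hle)
  exact ⟨κ.var ∘ γ₀, map_var_comp_head hγ₀, fun b hb => rename_var_comp_mem hKA hKB hγ₀
    (fun v hv => eq_frozen_of_freeVars_eq hrB hKA hγ₀ hfree hv) hb, hfree ▸ hbij⟩

lemma coe_atomsVars_eq {q : AggQuery Rel} (hq : IsCountQuery q) (hr : IsRelational q) :
    (atomsVars q.body.atoms : Set Var) = {x | x ∈ q.head} ∪ ndv q := by
  ext v
  by_cases hv : v ∈ q.head <;> simp [ndv, hr.body_vars, hv, hq.head_mem_atomsVars]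

namespace IsNdvBijHom

variable {f g : Var → Var} {q q' : AggQuery Rel}

lemma bijOn_atomsVars (hf : IsNdvBijHom f q q') (hg : IsNdvBijHom g q' q)
    (hq : IsCountQuery q) (hq' : IsCountQuery q') (hr : IsRelational q)
    (hr' : IsRelational q') :
    Set.BijOn f (atomsVars q.body.atoms) (atomsVars q'.body.atoms) := by
  have hhead := List.bijOn_of_map_eq hf.map_head hg.map_head
  have hdisj : Disjoint {x | x ∈ q.head} (ndv q : Set Var) :=
    Set.disjoint_left.2 fun x hx hx' => (Finset.mem_sdiff.1 hx').2 (List.mem_toFinset.2 hx)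
  rw [coe_atomsVars_eq hq hr, coe_atomsVars_eq hq' hr']
  refine hhead.union hf.bijOn_ndv ((Set.injOn_union hdisj).2
    ⟨hhead.injOn, hf.bijOn_ndv.injOn, fun x hx y hy hxy => ?_⟩)
  have := hf.bijOn_ndv.mapsTo hy
  rw [← hxy] at this
  exact (Finset.mem_sdiff.1 this).2 (List.mem_toFinset.2 (hhead.mapsTo hx))

lemma image_rename_subset [DecidableEq Rel] (hf : IsNdvBijHom f q q') {e : Var ≃ Var}
    (he : Set.EqOn e f (atomsVars q.body.atoms)) :
    q.body.atoms.image (Atom.rename e) ⊆ q'.body.atoms := by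
  intro a' ha'
  obtain ⟨a, ha, rfl⟩ := Finset.mem_image.1 ha'
  rw [Atom.rename_congr fun v hv => he (Atom.vars_subset_atomsVars ha hv)]
  exact hf.rename_mem a ha

lemma exists_isIsomorphism [DecidableEq Rel] (hf : IsNdvBijHom f q q')
    (hg : IsNdvBijHom g q' q) (hq : IsCountQuery q) (hq' : IsCountQuery q')
    (hr : IsRelational q) (hr' : IsRelational q') : ∃ e, IsIsomorphism e q q' := by
  obtain ⟨e, he⟩ :=
    (hf.bijOn_atomsVars hg hq hq' hr hr').exists_equiv_eqOn (Finset.finite_toSet _)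
  obtain ⟨e', he'⟩ :=
    (hg.bijOn_atomsVars hf hq' hq hr' hr).exists_equiv_eqOn (Finset.finite_toSet _)
  have hcard : ∀ (e : Var ≃ Var) (R : Finset (Atom Rel)), #(R.image (Atom.rename e)) = #R :=
    fun e _ => Finset.card_image_of_injective _ (Atom.rename_injective e.symm_comp_self)
  refine ⟨e, ?_, Finset.eq_of_subset_of_card_le (hf.image_rename_subset he) ?_⟩
  · rw [← hf.map_head]
    exact List.map_congr_left fun v hv => he (hq.head_mem_atomsVars hv)
  · calc #q'.body.atoms = #(q'.body.atoms.image (Atom.rename e')) := (hcard e' _).symm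
      _ ≤ #q.body.atoms := Finset.card_le_card (hg.image_rename_subset he')
      _ = #(q.body.atoms.image (Atom.rename e)) := (hcard e _).symm

end IsNdvBijHom

/-- Two relational COUNT-queries are equivalent if and only if
they are isomorphic, i.e., some bijection `e` of the variables maps the head of
`q` to the head of `q'` and the relational atoms of `q` onto those of `q'`. -/
theorem relational_count_equiv_iff_iso {Rel : Type} [DecidableEq Rel]
    (q q' : AggQuery Rel) (hq : IsCountQuery q) (hq' : IsCountQuery q')
    (hr : IsRelational q) (hr' : IsRelational q') :
    q.equiv q' ↔
      ∃ e : Var ≃ Var, q.head.map (fun x => e x) = q'.head ∧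
        q.body.atoms.image (Atom.rename (fun x => e x)) = q'.body.atoms := by
  refine ⟨fun h => ?_, fun ⟨e, he⟩ => IsIsomorphism.equiv he hq hq' hr hr'⟩
  have hcount := ncard_group_eq_of_equiv hq hq' hr hr' h
  have hcount' := fun D hD t => (hcount D hD t).symm
  have hle := card_ndv_le_of_ncard_group_eq hq' hr' hr hcount'
  have hle' := card_ndv_le_of_ncard_group_eq hq hr hr' hcount
  obtain ⟨f, hf⟩ := exists_isNdvBijHom_of_ncard_group_eq hq' hr' hr hcount' hle'
  obtain ⟨g, hg⟩ := exists_isNdvBijHom_of_ncard_group_eq hq hr hr' hcount hle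
  exact hf.exists_isIsomorphism hg hq hq' hr hr'

end CQ
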